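/- Let Γ = ℝ × {y ∈ ℝ² : y₂ ≤ −|y₁|} ⊆ ℝ³ and F : ℝ² → ℝ³, F(x) = (x₁, x₂, c x₂² + d x₂⁴) for parameters c, d ∈ ℝ (the case a = b = 0 of the example). Then MSCQ holds at x̄ = (0,0): there exist κ > 0 and a neighborhood U of x̄ such that d_{F^{-1}(Γ)}(x) ≤ κ d_Γ(F(x)) for all x ∈ U. In fact, near x̄ the feasible set F^{-1}(Γ) equals ℝ × {0}, d_{F^{-1}(Γ)}(x) = |x₂|, and for ε ∈ (0,1) and x close enough to 0 (so that −ε|x₂| ≤ c x₂² + d x₂⁴) one has d_Γ(x₁, x₂, −ε|x₂|) = ((1−ε)/√2)|x₂|, whence κ = √2/(1−ε) works. -/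
import Mathlib


open Set Filter Topology Metric

noncomputable section

/-- The vector `(a, b, e)` in Euclidean 3-space. -/
def v3 (a b e : ℝ) : EuclideanSpace ℝ (Fin 3) :=
  (WithLp.equiv 2 (Fin 3 → ℝ)).symm ![a, b, e]

/-- `Γ = ℝ × {(y₁, y₂) : y₂ ≤ -|y₁|} ⊆ ℝ³`. -/
def Gamma14 : Set (EuclideanSpace ℝ (Fin 3)) :=
  {y | y 2 ≤ -|y 1|}

def v2' (a b : ℝ) : EuclideanSpace ℝ (Fin 2) :=
  (WithLp.equiv 2 (Fin 2 → ℝ)).symm ![a, b]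

@[simp] lemma v3_0 (a b e : ℝ) : v3 a b e 0 = a := rfl
@[simp] lemma v3_1 (a b e : ℝ) : v3 a b e 1 = b := rfl
@[simp] lemma v3_2 (a b e : ℝ) : v3 a b e 2 = e := rfl
@[simp] lemma v2'_0 (a b : ℝ) : v2' a b 0 = a := rfl
@[simp] lemma v2'_1 (a b : ℝ) : v2' a b 1 = b := rfl

lemma le_infDist' {α : Type*} [MetricSpace α] {s : Set α} {x : α} {m : ℝ}
    (hs : s.Nonempty) (h : ∀ y ∈ s, m ≤ dist x y) : m ≤ infDist x s := by
  by_contra hc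
  push_neg at hc
  obtain ⟨y, hy, hlt⟩ := (infDist_lt_iff hs).1 hc
  exact absurd (h y hy) (not_le.2 hlt)

lemma dist3 (p q : EuclideanSpace ℝ (Fin 3)) :
    dist p q = Real.sqrt ((p 0 - q 0)^2 + ((p 1 - q 1)^2 + (p 2 - q 2)^2)) := by
  rw [EuclideanSpace.dist_eq, Fin.sum_univ_three]
  simp [Real.dist_eq, sq_abs, add_assoc]

lemma dist2 (p q : EuclideanSpace ℝ (Fin 2)) :
    dist p q = Real.sqrt ((p 0 - q 0)^2 + (p 1 - q 1)^2) := by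
  rw [EuclideanSpace.dist_eq, Fin.sum_univ_two]
  simp [Real.dist_eq, sq_abs]

lemma coord1_le_dist2 (p q : EuclideanSpace ℝ (Fin 2)) : |p 1 - q 1| ≤ dist p q := by
  rw [dist2, ← Real.sqrt_sq_eq_abs]
  exact Real.sqrt_le_sqrt (by nlinarith [sq_nonneg (p 0 - q 0)])

lemma gamma_ne : Gamma14.Nonempty := ⟨0, by simp [Gamma14]⟩

lemma keyA (p q : EuclideanSpace ℝ (Fin 3)) (s : ℝ) (hs : s = 1 ∨ s = -1)
    (hq : q ∈ Gamma14) : s * p 1 + p 2 ≤ Real.sqrt 2 * dist p q := by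
  have hq0 : q 2 ≤ -|q 1| := hq
  have hq' : s * q 1 + q 2 ≤ 0 := by
    have h1 : s * q 1 ≤ |q 1| := by
      rcases hs with h | h
      · simpa [h] using le_abs_self (q 1)
      · simpa [h] using neg_le_abs (q 1)
    linarith
  set a := p 1 - q 1 with ha
  set b := p 2 - q 2 with hb
  have h1 : s * p 1 + p 2 ≤ s * a + b := by rw [ha, hb]; nlinarith
  have hDnn : (0:ℝ) ≤ dist p q := dist_nonneg
  have hD2 : (dist p q)^2 = (p 0 - q 0)^2 + (a^2 + b^2) := by
    rw [dist3, Real.sq_sqrt (by positivity)]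
  have hs2 : s^2 = 1 := by rcases hs with h | h <;> simp [h]
  have h2 : (s * a + b)^2 ≤ (Real.sqrt 2 * dist p q)^2 := by
    have he : (Real.sqrt 2 * dist p q)^2 = 2 * (dist p q)^2 := by
      rw [mul_pow, Real.sq_sqrt (by norm_num)]
    rw [he, hD2]
    nlinarith [sq_nonneg (s*a - b), sq_nonneg (p 0 - q 0)]
  have hrt : (0:ℝ) ≤ Real.sqrt 2 * dist p q := by positivity
  nlinarith [le_abs_self (s*a+b), sq_abs (s*a+b)]

lemma lowerΓ (p : EuclideanSpace ℝ (Fin 3)) (s : ℝ) (hs : s = 1 ∨ s = -1) :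
    (s * p 1 + p 2) / Real.sqrt 2 ≤ infDist p Gamma14 := by
  apply le_infDist' gamma_ne
  intro q hq
  have hk := keyA p q s hs hq
  have h2 : (0:ℝ) < Real.sqrt 2 := by positivity
  rw [div_le_iff₀ h2]
  linarith

-- sign of x₂
lemma sign_spec (x : ℝ) : ∃ s : ℝ, (s = 1 ∨ s = -1) ∧ s * x = |x| := by
  rcases le_or_gt 0 x with h | h
  · exact ⟨1, Or.inl rfl, by rw [abs_of_nonneg h]; ring⟩
  · exact ⟨-1, Or.inr rfl, by rw [abs_of_neg h]; ring⟩

lemma part3 (ε : ℝ) (hε : ε ∈ Set.Ioo (0:ℝ) 1) (x₁ x₂ : ℝ) :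
    infDist (v3 x₁ x₂ (-(ε * |x₂|))) Gamma14 = ((1 - ε) / Real.sqrt 2) * |x₂| := by
  obtain ⟨hε0, hε1⟩ := hε
  obtain ⟨s, hs, hsx⟩ := sign_spec x₂
  have hs2 : s^2 = 1 := by rcases hs with h | h <;> simp [h]
  have habs : (0:ℝ) ≤ |x₂| := abs_nonneg _
  have hrt : (0:ℝ) < Real.sqrt 2 := by positivity
  have hrt2 : (Real.sqrt 2)^2 = 2 := Real.sq_sqrt (by norm_num)
  set p := v3 x₁ x₂ (-(ε * |x₂|)) with hp
  apply le_antisymm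
  · -- upper bound via explicit point
    set w := (1 + ε) * |x₂| / 2 with hw
    have hw0 : 0 ≤ w := by positivity
    have hyΓ : v3 x₁ (s * w) (-w) ∈ Gamma14 := by
      simp only [Gamma14, Set.mem_setOf_eq, v3_1, v3_2]
      have : |s * w| = w := by
        rw [abs_mul]
        rcases hs with h | h <;> simp [h, abs_of_nonneg hw0]
      rw [this]
    have hd : dist p (v3 x₁ (s * w) (-w)) = ((1 - ε) / Real.sqrt 2) * |x₂| := by
      rw [dist3]
      simp only [hp, v3_0, v3_1, v3_2]
      have e1 : (x₂ - s * w)^2 = ((1 - ε) * |x₂| / 2)^2 := by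
        have : x₂ - s * w = s * (|x₂| - w) := by linear_combination s * hsx - x₂ * hs2
        rw [this, mul_pow, hs2, hw]; ring
      have e2 : (-(ε * |x₂|) - -w)^2 = ((1 - ε) * |x₂| / 2)^2 := by rw [hw]; ring
      rw [e1, e2, sub_self]
      have : (0:ℝ)^2 + (((1 - ε) * |x₂| / 2)^2 + ((1 - ε) * |x₂| / 2)^2)
          = 2 * ((1 - ε) * |x₂| / 2)^2 := by ring
      rw [this]
      have ht0 : (0:ℝ) ≤ (1 - ε) * |x₂| / 2 := by
        have : (0:ℝ) ≤ 1 - ε := by linarith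
        positivity
      rw [show (2:ℝ) * ((1 - ε) * |x₂| / 2)^2 = (Real.sqrt 2 * ((1 - ε) * |x₂| / 2))^2 by
        rw [mul_pow, hrt2]]
      rw [Real.sqrt_sq (mul_nonneg hrt.le ht0)]
      field_simp
      nlinarith [hrt2]
    calc infDist p Gamma14 ≤ dist p (v3 x₁ (s * w) (-w)) := infDist_le_dist_of_mem hyΓ
      _ = _ := hd
  · -- lower bound
    have := lowerΓ p s hs
    have hp1 : p 1 = x₂ := rfl
    have hp2 : p 2 = -(ε * |x₂|) := rfl
    rw [hp1, hp2, hsx] at this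
    calc ((1 - ε) / Real.sqrt 2) * |x₂| = (s * x₂ + -(ε * |x₂|)) / Real.sqrt 2 := by
          rw [hsx]; ring
      _ ≤ _ := by rw [hsx]; exact this

lemma mem_pre (c d : ℝ) (F : EuclideanSpace ℝ (Fin 2) → EuclideanSpace ℝ (Fin 3))
    (hF : ∀ x, F x = v3 (x 0) (x 1) (c * (x 1) ^ 2 + d * (x 1) ^ 4))
    (x : EuclideanSpace ℝ (Fin 2)) :
    x ∈ F ⁻¹' Gamma14 ↔ c * (x 1) ^ 2 + d * (x 1) ^ 4 ≤ -|x 1| := by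
  simp [Set.mem_preimage, hF, Gamma14]

lemma part2core (c d : ℝ) (F : EuclideanSpace ℝ (Fin 2) → EuclideanSpace ℝ (Fin 3))
    (hF : ∀ x, F x = v3 (x 0) (x 1) (c * (x 1) ^ 2 + d * (x 1) ^ 4))
    (x : EuclideanSpace ℝ (Fin 2))
    (hx : |x 1| < min 1 (1 / (|c| + |d| + 1)) / 2) :
    infDist x (F ⁻¹' Gamma14) = |x 1| := by
  set δ := min 1 (1 / (|c| + |d| + 1)) with hδdef
  have hK : (0:ℝ) < |c| + |d| + 1 := by positivity
  have hδ0 : 0 < δ := lt_min one_pos (by positivity)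
  have hδ1 : δ ≤ 1 := min_le_left _ _
  have hδ2 : δ ≤ 1 / (|c| + |d| + 1) := min_le_right _ _
  have hzero : ∀ y : EuclideanSpace ℝ (Fin 2), y ∈ F ⁻¹' Gamma14 → |y 1| < δ → y 1 = 0 := by
    intro y hy hlt
    by_contra h0
    have hmem : c * (y 1) ^ 2 + d * (y 1) ^ 4 ≤ -|y 1| := (mem_pre c d F hF y).1 hy
    have hy1 : 0 < |y 1| := abs_pos.2 h0
    have hy2 : |y 1| < 1 := lt_of_lt_of_le hlt hδ1
    have hKy : (|c| + |d|) * |y 1| < 1 := by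
      have h' : |y 1| < 1 / (|c| + |d| + 1) := lt_of_lt_of_le hlt hδ2
      have h'' : |y 1| * (|c| + |d| + 1) < 1 := (lt_div_iff₀ hK).1 h'
      nlinarith
    have hsq : (y 1) ^ 2 ≤ 1 := by nlinarith [sq_abs (y 1)]
    have h4 : (y 1) ^ 4 ≤ (y 1) ^ 2 := by nlinarith [sq_nonneg (y 1), hsq]
    have hc1 : -|c| * (y 1) ^ 2 ≤ c * (y 1) ^ 2 :=
      mul_le_mul_of_nonneg_right (neg_abs_le c) (sq_nonneg _)
    have hd1 : -|d| * (y 1) ^ 4 ≤ d * (y 1) ^ 4 :=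
      mul_le_mul_of_nonneg_right (neg_abs_le d) (by positivity)
    have hd2 : -|d| * (y 1) ^ 2 ≤ -|d| * (y 1) ^ 4 := by
      have := mul_le_mul_of_nonneg_left h4 (abs_nonneg d)
      linarith
    have hb : -((|c| + |d|) * (y 1) ^ 2) ≤ c * (y 1) ^ 2 + d * (y 1) ^ 4 := by linarith
    have hlt2 : (|c| + |d|) * (y 1) ^ 2 < |y 1| := by nlinarith [sq_abs (y 1)]
    linarith
  have hy₀ : v2' (x 0) 0 ∈ F ⁻¹' Gamma14 := by
    rw [mem_pre c d F hF]
    simp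
  have hdist : dist x (v2' (x 0) 0) = |x 1| := by
    rw [dist2]; simp [Real.sqrt_sq_eq_abs]
  apply le_antisymm
  · calc infDist x (F ⁻¹' Gamma14) ≤ dist x (v2' (x 0) 0) := infDist_le_dist_of_mem hy₀
      _ = |x 1| := hdist
  · apply le_infDist' ⟨_, hy₀⟩
    intro y hy
    have hc := coord1_le_dist2 x y
    rcases lt_or_ge (|y 1|) δ with h | h
    · have hz := hzero y hy h
      calc |x 1| = |x 1 - y 1| := by rw [hz, sub_zero]
        _ ≤ dist x y := hc
    · have h1 : |y 1| - |x 1| ≤ |x 1 - y 1| := by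
        have h2 := abs_sub_abs_le_abs_sub (y 1) (x 1)
        rw [abs_sub_comm] at h2
        linarith
      linarith

theorem stmt14 (c d : ℝ)
    (F : EuclideanSpace ℝ (Fin 2) → EuclideanSpace ℝ (Fin 3))
    (hF : ∀ x, F x = v3 (x 0) (x 1) (c * (x 1) ^ 2 + d * (x 1) ^ 4)) :
    (∃ κ > (0 : ℝ), ∃ U ∈ 𝓝 (0 : EuclideanSpace ℝ (Fin 2)), ∀ x ∈ U,
        Metric.infDist x (F ⁻¹' Gamma14) ≤ κ * Metric.infDist (F x) Gamma14) ∧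
    (∀ᶠ x in 𝓝 (0 : EuclideanSpace ℝ (Fin 2)),
        Metric.infDist x (F ⁻¹' Gamma14) = |x 1|) ∧
    (∀ ε ∈ Set.Ioo (0 : ℝ) 1, ∀ x₁ x₂ : ℝ,
        Metric.infDist (v3 x₁ x₂ (-(ε * |x₂|))) Gamma14 =
          ((1 - ε) / Real.sqrt 2) * |x₂|) := by
  have hK : (0:ℝ) < |c| + |d| + 1 := by positivity
  set δ := min 1 (1 / (|c| + |d| + 1)) with hδdef
  have hδ0 : 0 < δ := lt_min one_pos (by positivity)
  have hδ1 : δ ≤ 1 := min_le_left _ _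
  have hδ2 : δ ≤ 1 / (|c| + |d| + 1) := min_le_right _ _
  have hrt : (0:ℝ) < Real.sqrt 2 := by positivity
  have hrt2 : (Real.sqrt 2)^2 = 2 := Real.sq_sqrt (by norm_num)
  have hcont : Continuous fun x : EuclideanSpace ℝ (Fin 2) => |x 1| :=
    ((EuclideanSpace.proj (1 : Fin 2)).continuous).abs
  have hUopen : IsOpen {x : EuclideanSpace ℝ (Fin 2) | |x 1| < δ / 2} :=
    isOpen_lt hcont continuous_const
  have hU0 : (0 : EuclideanSpace ℝ (Fin 2)) ∈ {x : EuclideanSpace ℝ (Fin 2) | |x 1| < δ / 2} := by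
    have h0 : (0 : EuclideanSpace ℝ (Fin 2)) 1 = 0 := rfl
    simp only [Set.mem_setOf_eq, h0, abs_zero]
    positivity
  have hUnhds : {x : EuclideanSpace ℝ (Fin 2) | |x 1| < δ / 2} ∈
      𝓝 (0 : EuclideanSpace ℝ (Fin 2)) := hUopen.mem_nhds hU0
  refine ⟨⟨2 * Real.sqrt 2, by positivity, {x | |x 1| < δ / 2}, hUnhds, ?_⟩,
    Filter.eventually_of_mem hUnhds (fun x hx => part2core c d F hF x hx),
    fun ε hε x₁ x₂ => part3 ε hε x₁ x₂⟩
  intro x hx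
  simp only [Set.mem_setOf_eq] at hx
  rw [part2core c d F hF x hx]
  obtain ⟨s, hs, hsx⟩ := sign_spec (x 1)
  have hlow := lowerΓ (F x) s hs
  have h1 : (F x) 1 = x 1 := by rw [hF]; rfl
  have h2 : (F x) 2 = c * (x 1) ^ 2 + d * (x 1) ^ 4 := by rw [hF]; rfl
  rw [h1, h2] at hlow
  have hx1 : |x 1| ≤ 1 := by
    have : δ / 2 ≤ 1 := by linarith
    linarith
  have hsq : (x 1) ^ 2 ≤ 1 := by nlinarith [sq_abs (x 1), abs_nonneg (x 1)]
  have h4 : (x 1) ^ 4 ≤ (x 1) ^ 2 := by nlinarith [sq_nonneg (x 1)]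
  have hc1 : -|c| * (x 1) ^ 2 ≤ c * (x 1) ^ 2 :=
    mul_le_mul_of_nonneg_right (neg_abs_le c) (sq_nonneg _)
  have hd1 : -|d| * (x 1) ^ 4 ≤ d * (x 1) ^ 4 :=
    mul_le_mul_of_nonneg_right (neg_abs_le d) (by positivity)
  have hd2 : -|d| * (x 1) ^ 2 ≤ -|d| * (x 1) ^ 4 := by
    have := mul_le_mul_of_nonneg_left h4 (abs_nonneg d)
    linarith
  have hb : -((|c| + |d|) * (x 1) ^ 2) ≤ c * (x 1) ^ 2 + d * (x 1) ^ 4 := by linarith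
  have hKx : (|c| + |d|) * |x 1| ≤ 1 / 2 := by
    have hm : (|c| + |d| + 1) * |x 1| < (|c| + |d| + 1) * (δ / 2) :=
      mul_lt_mul_of_pos_left hx hK
    have hm2 : δ * (|c| + |d| + 1) ≤ 1 := by
      rw [← le_div_iff₀ hK]; exact hδ2
    nlinarith [abs_nonneg (x 1)]
  have hp2 : -((1:ℝ) / 2 * |x 1|) ≤ c * (x 1) ^ 2 + d * (x 1) ^ 4 := by
    have h5 : (|c| + |d|) * (x 1) ^ 2 ≤ 1 / 2 * |x 1| := by
      nlinarith [sq_abs (x 1), abs_nonneg (x 1)]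
    linarith
  have hnum : |x 1| / 2 ≤ s * x 1 + (c * (x 1) ^ 2 + d * (x 1) ^ 4) := by
    rw [hsx]; linarith
  have hfinal : |x 1| / (2 * Real.sqrt 2) ≤ infDist (F x) Gamma14 := by
    calc |x 1| / (2 * Real.sqrt 2) = (|x 1| / 2) / Real.sqrt 2 := by ring
      _ ≤ (s * x 1 + (c * (x 1) ^ 2 + d * (x 1) ^ 4)) / Real.sqrt 2 := by
          gcongr
      _ ≤ infDist (F x) Gamma14 := hlow
  have hmul := mul_le_mul_of_nonneg_left hfinal
    (le_of_lt (by positivity : (0:ℝ) < 2 * Real.sqrt 2))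
  calc |x 1| = 2 * Real.sqrt 2 * (|x 1| / (2 * Real.sqrt 2)) := by
        field_simp
    _ ≤ 2 * Real.sqrt 2 * infDist (F x) Gamma14 := hmul
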